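/- Let k ≥ 4 and let G be a W_k-semi-saturated graph on at least k + 1 vertices. If x and y are distinct vertices of G both of degree 2, then x and y have exactly one common neighbour, i.e. |N(x) ∩ N(y)| = 1. -/

import Mathlib

/-!
In a copy of `W_k` inside `G + uv` every vertex has degree at least `3` and the hub has degree
`k ≥ 4`, so an endpoint of `uv` of degree `2` in `G` is a rim vertex of the copy, and its three
neighbours in `G + uv` are exactly the images of its neighbours in the wheel.

If `x` and `y` were adjacent, adding an edge from `x` to a non-neighbour would put `y`, of degree
`2`, into a copy of `W_k`. So they are not adjacent; adding `xy` makes them adjacent rim vertices of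
a copy of `W_k`, whose only common neighbour is the hub since `C_k` is triangle-free for `k ≥ 4`.
Adding `xy` does not change the common neighbourhood of `x` and `y`.
-/

open SimpleGraph

/-- `G` contains a copy of `F`, i.e. a subgraph isomorphic to `F`. -/
def HasCopy {V W : Type*} (F : SimpleGraph V) (G : SimpleGraph W) : Prop :=
  ∃ f : F →g G, Function.Injective f

/-- `G` is `F`-free: `G` contains no subgraph isomorphic to `F`. -/
def IsFree {V W : Type*} (F : SimpleGraph V) (G : SimpleGraph W) : Prop :=
  ¬ HasCopy F G

/-- `G` is `F`-semi-saturated: for every pair of non-adjacent vertices `u ≠ v`,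
the graph `G + uv` contains a copy of `F` using the edge `uv`. -/
def IsSemiSat {V W : Type*} (F : SimpleGraph V) (G : SimpleGraph W) : Prop :=
  ∀ u v : W, u ≠ v → ¬ G.Adj u v →
    ∃ f : F →g (G ⊔ fromEdgeSet {s(u, v)}), Function.Injective f ∧
      ∃ a b : V, F.Adj a b ∧ f a = u ∧ f b = v

/-- `G` is `F`-saturated: `F`-free and `F`-semi-saturated. -/
def IsSat {V W : Type*} (F : SimpleGraph V) (G : SimpleGraph W) : Prop :=
  IsFree F G ∧ IsSemiSat F G

/-- The join `G ∨ H` of two graphs. -/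
def graphJoin {V W : Type*} (G : SimpleGraph V) (H : SimpleGraph W) :
    SimpleGraph (V ⊕ W) where
  Adj x y :=
    match x, y with
    | Sum.inl a, Sum.inl b => G.Adj a b
    | Sum.inr a, Sum.inr b => H.Adj a b
    | Sum.inl _, Sum.inr _ => True
    | Sum.inr _, Sum.inl _ => True
  symm := ⟨by rintro (a | a) (b | b) h <;> first | exact G.adj_symm h | exact H.adj_symm h | trivial⟩
  loopless := ⟨by rintro (a | a) h <;> first | exact G.irrefl (v := a) h | exact H.irrefl (v := a) h⟩

/-- The wheel `W_k = K_1 ∨ C_k`. -/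
def wheel (k : ℕ) : SimpleGraph (Unit ⊕ Fin k) :=
  graphJoin (⊥ : SimpleGraph Unit) (cycleGraph k)

/-- `sat(n, F)`: the minimum number of edges in an `F`-saturated graph on `n` vertices. -/
noncomputable def satNumber {V : Type*} (F : SimpleGraph V) (n : ℕ) : ℕ :=
  sInf { m | ∃ G : SimpleGraph (Fin n), IsSat F G ∧ G.edgeSet.ncard = m }

/-- `ssat(n, F)`: the minimum number of edges in an `F`-semi-saturated graph on `n` vertices. -/
noncomputable def ssatNumber {V : Type*} (F : SimpleGraph V) (n : ℕ) : ℕ :=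
  sInf { m | ∃ G : SimpleGraph (Fin n), IsSemiSat F G ∧ G.edgeSet.ncard = m }

namespace SimpleGraph

variable {V W : Type*}

section AddEdge

variable (G : SimpleGraph V)

lemma neighborSet_sup_edge_left {u v : V} (h : u ≠ v) :
    (G ⊔ edge u v).neighborSet u = insert v (G.neighborSet u) := by
  ext w
  simp only [mem_neighborSet, sup_adj, edge_adj, Set.mem_insert_iff]
  grind

lemma neighborSet_sup_edge_of_ne {u v w : V} (hu : w ≠ u) (hv : w ≠ v) :
    (G ⊔ edge u v).neighborSet w = G.neighborSet w := by
  ext z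
  simp only [mem_neighborSet, sup_adj, edge_adj]
  grind

lemma ncard_neighborSet_sup_edge_left_le [Finite V] (u v : V) :
    ((G ⊔ edge u v).neighborSet u).ncard ≤ (G.neighborSet u).ncard + 1 := by
  rcases eq_or_ne u v with rfl | h
  · simp
  · rw [neighborSet_sup_edge_left G h]
    exact Set.ncard_insert_le _ _

lemma commonNeighbors_sup_edge {u v : V} (h : u ≠ v) :
    (G ⊔ edge u v).commonNeighbors u v = G.commonNeighbors u v := by
  rw [commonNeighbors_eq, commonNeighbors_eq, neighborSet_sup_edge_left G h, edge_comm,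
    neighborSet_sup_edge_left G h.symm]
  ext w
  simp only [Set.mem_inter_iff, Set.mem_insert_iff, mem_neighborSet]
  grind [G.loopless.irrefl]

lemma exists_ne_not_adj_of_ncard_neighborSet_add_two_le [Finite V] {x : V}
    (h : (G.neighborSet x).ncard + 2 ≤ Nat.card V) : ∃ w, w ≠ x ∧ ¬ G.Adj x w := by
  by_contra! hcon
  have hsub : (Set.univ : Set V) ⊆ insert x (G.neighborSet x) :=
    fun w _ ↦ (eq_or_ne w x).imp id (hcon w)
  have := (Set.ncard_le_ncard hsub).trans (Set.ncard_insert_le x (G.neighborSet x))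
  rw [Set.ncard_univ] at this
  omega

end AddEdge

namespace Hom

variable {F : SimpleGraph V} {H : SimpleGraph W} [Finite W] (f : F →g H)

lemma ncard_neighborSet_le (hf : Function.Injective f) (a : V) :
    (F.neighborSet a).ncard ≤ (H.neighborSet (f a)).ncard := by
  rw [← Set.ncard_image_of_injective _ hf]
  exact Set.ncard_le_ncard (f.image_neighborSet_subset a)

lemma neighborSet_eq_image_of_ncard_le (hf : Function.Injective f) {a : V}
    (h : (H.neighborSet (f a)).ncard ≤ (F.neighborSet a).ncard) :
    H.neighborSet (f a) = f '' F.neighborSet a :=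
  (Set.eq_of_subset_of_ncard_le (f.image_neighborSet_subset a)
    (by rwa [Set.ncard_image_of_injective _ hf])).symm

end Hom

lemma cycleGraph_commonNeighbors_eq_empty {k : ℕ} (hk : 4 ≤ k) {i j : Fin k}
    (h : (cycleGraph k).Adj i j) : (cycleGraph k).commonNeighbors i j = ∅ := by
  obtain ⟨m, rfl⟩ : ∃ m, k = m + 4 := ⟨k - 4, by omega⟩
  have h3 : (3 : Fin (m + 4)) ≠ 0 := by simp [Fin.ext_iff, Nat.mod_eq_of_lt]
  rw [← mem_neighborSet, cycleGraph_neighborSet] at h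
  rw [commonNeighbors_eq, cycleGraph_neighborSet, cycleGraph_neighborSet]
  ext c
  simp only [Set.mem_insert_iff, Set.mem_singleton_iff] at h
  simp only [Set.mem_inter_iff, Set.mem_insert_iff, Set.mem_singleton_iff, Set.mem_empty_iff_false,
    iff_false]
  grind

end SimpleGraph

open SimpleGraph

lemma wheel_neighborSet_inl (k : ℕ) (u : Unit) :
    (wheel k).neighborSet (.inl u) = Set.range Sum.inr := by
  ext (_ | _) <;> simp [wheel, graphJoin]

lemma wheel_neighborSet_inr (k : ℕ) (i : Fin k) :
    (wheel k).neighborSet (.inr i) = insert (.inl ()) (Sum.inr '' (cycleGraph k).neighborSet i) := by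
  ext (_ | _) <;> simp [wheel, graphJoin]

lemma ncard_wheel_neighborSet_inl (k : ℕ) (u : Unit) :
    ((wheel k).neighborSet (.inl u)).ncard = k := by
  rw [wheel_neighborSet_inl, ← Set.image_univ, Set.ncard_image_of_injective _ Sum.inr_injective,
    Set.ncard_univ, Nat.card_fin]

lemma ncard_wheel_neighborSet_inr {k : ℕ} (hk : 3 ≤ k) (i : Fin k) :
    ((wheel k).neighborSet (.inr i)).ncard = 3 := by
  obtain ⟨m, rfl⟩ : ∃ m, k = m + 3 := ⟨k - 3, by omega⟩
  rw [wheel_neighborSet_inr, Set.ncard_insert_of_notMem (by simp),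
    Set.ncard_image_of_injective _ Sum.inr_injective, Set.ncard_eq_toFinset_card',
    Set.toFinset_card, card_neighborSet_eq_degree, cycleGraph_degree_three_le]

lemma three_le_ncard_wheel_neighborSet {k : ℕ} (hk : 3 ≤ k) (a : Unit ⊕ Fin k) :
    3 ≤ ((wheel k).neighborSet a).ncard := by
  rcases a with u | i
  · rw [ncard_wheel_neighborSet_inl]; exact hk
  · rw [ncard_wheel_neighborSet_inr hk]

lemma wheel_commonNeighbors_inr {k : ℕ} (hk : 4 ≤ k) {i j : Fin k} (h : (cycleGraph k).Adj i j) :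
    (wheel k).commonNeighbors (.inr i) (.inr j) = {.inl ()} := by
  rw [commonNeighbors_eq, wheel_neighborSet_inr, wheel_neighborSet_inr, ← Set.insert_inter_distrib,
    ← Set.image_inter Sum.inr_injective, ← commonNeighbors_eq,
    cycleGraph_commonNeighbors_eq_empty hk h, Set.image_empty, insert_empty_eq]

lemma exists_inr_and_neighborSet_eq_image_of_ncard_le_three {W : Type*} [Finite W]
    {H : SimpleGraph W} {k : ℕ} (hk : 4 ≤ k) (f : wheel k →g H) (hf : Function.Injective f)
    {a : Unit ⊕ Fin k} (ha : (H.neighborSet (f a)).ncard ≤ 3) :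
    ∃ i, a = .inr i ∧ H.neighborSet (f a) = f '' (wheel k).neighborSet a := by
  rcases a with u | i
  · have := f.ncard_neighborSet_le hf (.inl u)
    rw [ncard_wheel_neighborSet_inl] at this
    omega
  · refine ⟨i, rfl, f.neighborSet_eq_image_of_ncard_le hf ?_⟩
    rwa [ncard_wheel_neighborSet_inr (by omega)]

namespace IsSemiSat

variable {V U : Type*} {F : SimpleGraph U} {G : SimpleGraph V}

lemma exists_injective_hom_sup_edge (hG : IsSemiSat F G) {u v : V} (huv : u ≠ v)
    (h : ¬ G.Adj u v) :
    ∃ f : F →g G ⊔ edge u v, Function.Injective f ∧ ∃ a b, F.Adj a b ∧ f a = u ∧ f b = v :=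
  hG u v huv h

variable [Finite V] {k : ℕ}

lemma not_adj_of_ncard_neighborSet_eq_two (hk : 4 ≤ k) (hV : 4 ≤ Nat.card V)
    (hG : IsSemiSat (wheel k) G) {x y : V} (hx : (G.neighborSet x).ncard = 2)
    (hy : (G.neighborSet y).ncard = 2) : ¬ G.Adj x y := by
  intro hxy
  obtain ⟨w, hwx, hxw⟩ := G.exists_ne_not_adj_of_ncard_neighborSet_add_two_le (x := x) (by omega)
  obtain ⟨f, hf, a, b, -, hfa, hfb⟩ := hG.exists_injective_hom_sup_edge hwx.symm hxw
  have hxH : ((G ⊔ edge x w).neighborSet (f a)).ncard ≤ 3 := by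
    rw [hfa]; linarith [G.ncard_neighborSet_sup_edge_left_le x w]
  obtain ⟨i, rfl, hN⟩ := exists_inr_and_neighborSet_eq_image_of_ncard_le_three hk f hf hxH
  have hyN : y ∈ (G ⊔ edge x w).neighborSet (f (.inr i)) := by rw [hfa]; exact Or.inl hxy
  obtain ⟨c, -, rfl⟩ := hN ▸ hyN
  have hcH : ((G ⊔ edge x w).neighborSet (f c)).ncard = 2 := by
    rw [G.neighborSet_sup_edge_of_ne hxy.ne' fun h ↦ hxw (by rwa [← h]), hy]
  have := f.ncard_neighborSet_le hf c
  have := three_le_ncard_wheel_neighborSet (by omega) c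
  omega

lemma ncard_commonNeighbors_eq_one (hk : 4 ≤ k) (hG : IsSemiSat (wheel k) G) {x y : V}
    (hxy : x ≠ y) (hadj : ¬ G.Adj x y) (hx : (G.neighborSet x).ncard = 2)
    (hy : (G.neighborSet y).ncard = 2) : (G.commonNeighbors x y).ncard = 1 := by
  obtain ⟨f, hf, a, b, hab, hfa, hfb⟩ := hG.exists_injective_hom_sup_edge hxy hadj
  have hxH : ((G ⊔ edge x y).neighborSet (f a)).ncard ≤ 3 := by
    rw [hfa]; linarith [G.ncard_neighborSet_sup_edge_left_le x y]
  have hyH : ((G ⊔ edge x y).neighborSet (f b)).ncard ≤ 3 := by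
    rw [hfb, edge_comm]; linarith [G.ncard_neighborSet_sup_edge_left_le y x]
  obtain ⟨i, rfl, hNx⟩ := exists_inr_and_neighborSet_eq_image_of_ncard_le_three hk f hf hxH
  obtain ⟨j, rfl, hNy⟩ := exists_inr_and_neighborSet_eq_image_of_ncard_le_three hk f hf hyH
  have hH : (G ⊔ edge x y).commonNeighbors (f (.inr i)) (f (.inr j)) = {f (.inl ())} := by
    rw [commonNeighbors_eq, hNx, hNy, ← Set.image_inter hf, ← commonNeighbors_eq,
      wheel_commonNeighbors_inr hk hab, Set.image_singleton]
  rw [hfa, hfb, G.commonNeighbors_sup_edge hxy] at hH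
  rw [hH, Set.ncard_singleton]

end IsSemiSat

/-- If `G` is `W_k`-semi-saturated on `n ≥ k + 1` vertices with `k ≥ 4`, then two
distinct vertices of degree `2` have exactly one common neighbour. -/
theorem roots_common_neighbour (k n : ℕ) (hk : 4 ≤ k) (hn : k + 1 ≤ n)
    (G : SimpleGraph (Fin n)) (hG : IsSemiSat (wheel k) G)
    (x y : Fin n) (hxy : x ≠ y)
    (hx : (G.neighborSet x).ncard = 2) (hy : (G.neighborSet y).ncard = 2) :
    (G.neighborSet x ∩ G.neighborSet y).ncard = 1 := by
  have hadj : ¬ G.Adj x y :=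
    hG.not_adj_of_ncard_neighborSet_eq_two hk (by rw [Nat.card_fin]; omega) hx hy
  exact hG.ncard_commonNeighbors_eq_one hk hxy hadj hx hy
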